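/- arXiv:1710.02922 — 5 statements merged into one kernel-verified Lean document; each statement's English description precedes it below -/
import Mathlib

section
/- Let $u_0<0$ and let $m:[u_0,0)\to\mathbb{R}$ be nonincreasing with $0\le 2m(u)<-u$ for every $u\in[u_0,0)$. If $\limsup_{u\to0^-}\frac{2m(u)}{-u}>0$, then $\int_{u_0}^{0}\frac{1}{-u'}\cdot\frac{2m(u')/(-u')}{1-2m(u')/(-u')}\,du'=+\infty$. -/
open MeasureTheory

lemma key_ineq (a b M c : ℝ) (ha : 0 < a) (hb : 0 < b) (hM : 0 ≤ 2*M) (hMa : 2*M < a)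
    (hab : a ≤ 2*b) (hcM : c*b < 2*M) :
    c/(4*b) ≤ (1/a) * ((2*M/a)/(1 - 2*M/a)) := by
  have h1 : 2*M/a < 1 := (div_lt_one ha).2 hMa
  have h0 : 0 ≤ 2*M/a := div_nonneg hM ha.le
  have h2 : 0 < 1 - 2*M/a := by linarith
  have step1 : 2*M/a ≤ (2*M/a)/(1 - 2*M/a) := by
    rw [le_div_iff₀ h2]
    nlinarith
  have step2 : (1/a) * (2*M/a) ≤ (1/a) * ((2*M/a)/(1 - 2*M/a)) :=
    mul_le_mul_of_nonneg_left step1 (by positivity)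
  refine le_trans ?_ step2
  have hrw : (1/a) * (2*M/a) = 2*M/(a*a) := by ring
  rw [hrw, div_le_div_iff₀ (by positivity) (by positivity)]
  nlinarith [mul_le_mul hab hab ha.le (by linarith : (0:ℝ) ≤ 2*b),
    mul_lt_mul_of_pos_right hcM (by positivity : (0:ℝ) < 4*b)]

/-- If `m` is nonincreasing on `[u₀,0)` with `0 ≤ 2m(u) < -u` and
`limsup_{u→0⁻} 2m(u)/(-u) > 0`, then the integral
`∫_{u₀}^{0} (1/(-u')) · (2m(u')/(-u')) / (1 - 2m(u')/(-u')) du'` is infinite. -/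
theorem stmt_1 (u0 : ℝ) (hu0 : u0 < 0) (m : ℝ → ℝ)
    (hmono : ∀ u ∈ Set.Ico u0 (0:ℝ), ∀ v ∈ Set.Ico u0 (0:ℝ), u ≤ v → m v ≤ m u)
    (hbound : ∀ u ∈ Set.Ico u0 (0:ℝ), 0 ≤ 2 * m u ∧ 2 * m u < -u)
    (hlimsup : 0 < Filter.limsup (fun u => 2 * m u / (-u)) (nhdsWithin 0 (Set.Ico u0 0))) :
    ∫⁻ u' in Set.Ico u0 (0:ℝ),
        ENNReal.ofReal
          ((1 / (-u')) * ((2 * m u' / (-u')) / (1 - 2 * m u' / (-u')))) = ⊤ := by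
  set l := nhdsWithin (0:ℝ) (Set.Ico u0 0) with hl
  have hne : l.NeBot := by
    rw [hl, ← mem_closure_iff_nhdsWithin_neBot, closure_Ico hu0.ne]
    exact ⟨hu0.le, le_rfl⟩
  -- the function is eventually nonnegative, hence cobounded
  have hev0 : ∀ᶠ u in l, 0 ≤ 2 * m u / (-u) := by
    filter_upwards [self_mem_nhdsWithin] with u hu
    exact div_nonneg (hbound u hu).1 (by linarith [hu.2])
  have hcob : Filter.IsCoboundedUnder (· ≤ ·) l (fun u => 2 * m u / (-u)) := by
    refine Filter.IsBoundedUnder.isCoboundedUnder_le ⟨0, ?_⟩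
    exact Filter.eventually_map.2 hev0
  set L := Filter.limsup (fun u => 2 * m u / (-u)) l with hL
  set c := L / 2 with hc
  have hcpos : 0 < c := by positivity
  have hfreq : ∃ᶠ u in l, c < 2 * m u / (-u) :=
    Filter.frequently_lt_of_lt_limsup hcob (by rw [hc]; linarith)
  -- from frequently: for every b < 0 there is v ∈ (b,0) ∩ Ico u0 0 with c < f v
  have hex : ∀ b : ℝ, b < 0 → ∃ v, b < v ∧ v ∈ Set.Ico u0 0 ∧ c < 2 * m v / (-v) := by
    intro b hb
    have h1 : ∀ᶠ u in l, b < u :=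
      Filter.Eventually.filter_mono nhdsWithin_le_nhds (eventually_gt_nhds hb)
    have h2 : ∀ᶠ u in l, u ∈ Set.Ico u0 0 := self_mem_nhdsWithin
    obtain ⟨v, hv1, hv2, hv3⟩ := (hfreq.and_eventually (h1.and h2)).exists
    exact ⟨v, hv2, hv3, hv1⟩
  choose! F hF using hex
  set v : ℕ → ℝ := fun n => Nat.rec (F (u0/2)) (fun _ p => F (p/2)) n with hvdef
  have hv0 : v 0 = F (u0/2) := rfl
  have hvs : ∀ n, v (n+1) = F (v n / 2) := fun n => rfl
  -- invariant
  have hinv : ∀ n, u0/2 < v n ∧ v n ∈ Set.Ico u0 0 ∧ c < 2 * m (v n) / (-(v n)) := by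
    intro n
    induction n with
    | zero =>
      obtain ⟨h1, h2, h3⟩ := hF (u0/2) (by linarith)
      exact ⟨h1, h2, h3⟩
    | succ k ih =>
      obtain ⟨ih1, ih2, ih3⟩ := ih
      have hvk0 : v k < 0 := ih2.2
      obtain ⟨h1, h2, h3⟩ := hF (v k / 2) (by linarith)
      rw [← hvs k] at h1 h2 h3
      exact ⟨by linarith, h2, h3⟩
  have hvneg : ∀ n, v n < 0 := fun n => (hinv n).2.1.2
  have hstep : ∀ n, v n < 2 * v (n+1) := by
    intro n
    have := (hF (v n / 2) (by linarith [hvneg n])).1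
    rw [← hvs n] at this
    linarith
  have hmonov : StrictMono v := by
    apply strictMono_nat_of_lt_succ
    intro n
    have := hstep n
    have := hvneg (n+1)
    linarith
  -- the intervals
  set s : ℕ → Set ℝ := fun n => Set.Ico (2 * v n) (v n) with hs
  have hmeas : ∀ n, MeasurableSet (s n) := fun n => measurableSet_Ico
  have hsub : ∀ n, s n ⊆ Set.Ico u0 (0:ℝ) := by
    intro n x hx
    have h1 := (hinv n).1
    have h2 := hvneg n
    exact ⟨by simp only [hs] at hx; linarith [hx.1], by simp only [hs] at hx; linarith [hx.2]⟩
  have hdisj : Pairwise (Function.onFun Disjoint s) := by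
    have key : ∀ i j : ℕ, i < j → Disjoint (s i) (s j) := by
      intro i j hij
      rw [Set.disjoint_left]
      intro x hxi hxj
      have h1 : x < v i := hxi.2
      have h2 : 2 * v j ≤ x := hxj.1
      have h3 : v i < 2 * v j := by
        have h4 : v i < 2 * v (i+1) := hstep i
        have h5 : v (i+1) ≤ v j := hmonov.le_iff_le.2 hij
        linarith
      linarith
    intro i j hij
    rcases lt_or_gt_of_ne hij with h | h
    · exact key i j h
    · exact (key j i h).symm
  -- per-interval lower bound
  have hterm : ∀ n, ENNReal.ofReal (c/4) ≤
      ∫⁻ u' in s n, ENNReal.ofReal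
        ((1 / (-u')) * ((2 * m u' / (-u')) / (1 - 2 * m u' / (-u')))) := by
    intro n
    have hvn := hvneg n
    have hbn : 0 < -(v n) := by linarith
    have hconst : (∫⁻ _ in s n, ENNReal.ofReal (c/(4*(-(v n))))) = ENNReal.ofReal (c/4) := by
      rw [setLIntegral_const, hs]
      rw [Real.volume_Ico]
      rw [← ENNReal.ofReal_mul (by positivity)]
      congr 1
      have : v n - 2 * v n = -(v n) := by ring
      rw [this, div_mul_eq_mul_div, div_eq_div_iff (by positivity) (by norm_num : (4:ℝ) ≠ 0)]
      ring
    rw [← hconst]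
    refine setLIntegral_mono' (hmeas n) ?_
    intro u hu
    have hu0' : u ∈ Set.Ico u0 (0:ℝ) := hsub n hu
    have hub := hbound u hu0'
    have huneg : u < 0 := hu0'.2
    have ha : 0 < -u := by linarith
    have hab : -u ≤ 2 * (-(v n)) := by
      have : 2 * v n ≤ u := hu.1
      linarith
    have hmv : m (v n) ≤ m u :=
      hmono u hu0' (v n) (hinv n).2.1 (le_of_lt hu.2)
    have hcM : c * (-(v n)) < 2 * m u := by
      have h1 : c < 2 * m (v n) / (-(v n)) := (hinv n).2.2
      have h2 : c * (-(v n)) < 2 * m (v n) := by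
        rw [← lt_div_iff₀ hbn]; exact h1
      linarith
    refine ENNReal.ofReal_le_ofReal ?_
    have := key_ineq (-u) (-(v n)) (m u) c ha hbn hub.1 hub.2 hab hcM
    convert this using 2 <;> ring_nf
  -- summing up
  have hsum : (∑' n, ∫⁻ u' in s n, ENNReal.ofReal
        ((1 / (-u')) * ((2 * m u' / (-u')) / (1 - 2 * m u' / (-u'))))) ≤
      ∫⁻ u' in Set.Ico u0 (0:ℝ), ENNReal.ofReal
        ((1 / (-u')) * ((2 * m u' / (-u')) / (1 - 2 * m u' / (-u')))) := by
    rw [← lintegral_iUnion hmeas hdisj]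
    exact lintegral_mono' (Measure.restrict_mono (Set.iUnion_subset hsub) le_rfl) le_rfl
  have htop : (∑' (_ : ℕ), ENNReal.ofReal (c/4)) = ⊤ :=
    ENNReal.tsum_const_eq_top_of_ne_zero (by simp [ENNReal.ofReal_eq_zero]; positivity)
  refine top_le_iff.1 ?_
  calc (⊤ : ENNReal) = ∑' (_ : ℕ), ENNReal.ofReal (c/4) := htop.symm
    _ ≤ _ := le_trans (ENNReal.tsum_le_tsum hterm) hsum
end

section
/- Assume in addition that $0<h_0(u)\le1$ for all $u\in[u_0,0)$ and that $\limsup_{u\to0^-}\big(1-h_0(u)\big)>0$ (i.e. $\frac{2m}{r}\nrightarrow0$ along $\underline{C}_0$). Then both $u\mapsto\Omega_0(u)^2h_0(u)$ and $u\mapsto\Omega_0(u)$ are nonincreasing on $[u_0,0)$ and both converge to $0$ as $u\to0^-$. -/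
/-!
Along the cone `Ω₀` and `g := Ω₀² h₀` are nonnegative with nonpositive derivatives, so both
decrease to limits `a` and `L`. If `a > 0`, then `h₀ = g / Ω₀²` converges, so the positive
limsup of `1 - h₀` is a genuine limit and `Ω₀² (1 - h₀)` stays above some `ε > 0` near `0`.
The second equation then gives `g' ≤ ε / u`, and integrating, `g ≤ C + ε log |u| → -∞`,
contradicting `g ≥ 0`. Hence `a = 0`, and `0 ≤ g ≤ Ω₀²` forces `g → 0` as well.
-/

open Set Filter Topology

theorem antitoneOn_of_hasDerivAt_nonpos {D : Set ℝ} (hD : Convex ℝ D) {f f' : ℝ → ℝ}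
    (hf : ∀ x ∈ D, HasDerivAt f (f' x) x) (hf' : ∀ x ∈ interior D, f' x ≤ 0) :
    AntitoneOn f D :=
  antitoneOn_of_hasDerivWithinAt_nonpos hD (fun x hx => (hf x hx).continuousAt.continuousWithinAt)
    (fun x hx => (hf x (interior_subset hx)).hasDerivWithinAt) hf'

theorem AntitoneOn.exists_tendsto_nhdsLT {f : ℝ → ℝ} {a b : ℝ} (hab : a < b)
    (hf : AntitoneOn f (Ico a b)) (hbdd : BddBelow (f '' Ico a b)) :
    ∃ l, Tendsto f (𝓝[<] b) (𝓝 l) :=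
  ⟨_, (hf.mono Ioo_subset_Ico_self).tendsto_nhdsWithin_Ioo_left (nonempty_Ioo.2 hab)
    (hbdd.mono (image_mono Ioo_subset_Ico_self))⟩

theorem tendsto_atBot_of_hasDerivAt_le_div {g g' : ℝ → ℝ} {ε : ℝ} (hε : 0 < ε)
    (hg : ∀ᶠ u in 𝓝[<] 0, HasDerivAt g (g' u) u ∧ g' u ≤ ε / u) :
    Tendsto g (𝓝[<] 0) atBot := by
  obtain ⟨t, ht : t < 0, hsub⟩ := mem_nhdsLT_iff_exists_Ioo_subset.1 hg
  -- For `u < 0`, `Real.log u = log |u|`: a primitive of `u⁻¹` that tends to `-∞` at `0⁻`.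
  have hanti : AntitoneOn (fun u => g u - ε * Real.log u) (Ioo t 0) := by
    refine antitoneOn_of_hasDerivAt_nonpos (convex_Ioo t 0)
      (fun u hu => (hsub hu).1.sub ((Real.hasDerivAt_log hu.2.ne).const_mul ε)) ?_
    intro u hu
    have hle := (hsub (interior_subset hu)).2
    rw [div_eq_mul_inv] at hle
    linarith
  have hv : t / 2 ∈ Ioo t 0 := ⟨by linarith, by linarith⟩
  have hbound : ∀ᶠ u in 𝓝[<] 0, g u ≤ (g (t / 2) - ε * Real.log (t / 2)) + ε * Real.log u := by
    filter_upwards [Ioo_mem_nhdsLT hv.2] with u hu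
    have := hanti hv ⟨hv.1.trans hu.1, hu.2⟩ hu.1.le
    linarith
  exact tendsto_atBot_mono' _ hbound
    (tendsto_atBot_add_const_left _ _ (Real.tendsto_log_nhdsLT_zero.const_mul_atBot hε))

theorem lapse_limit_eq_zero {Ω h : ℝ → ℝ} {a L : ℝ} (hΩ : Tendsto Ω (𝓝[<] 0) (𝓝 a))
    (hg : Tendsto (fun u => Ω u ^ 2 * h u) (𝓝[<] 0) (𝓝 L))
    (hode : ∀ᶠ u in 𝓝[<] 0,
      HasDerivAt (fun v => Ω v ^ 2 * h v) (-(Ω u ^ 2 * (1 - h u) / (-u))) u)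
    (hg_nonneg : ∀ᶠ u in 𝓝[<] 0, 0 ≤ Ω u ^ 2 * h u)
    (hlimsup : 0 < limsup (fun u => 1 - h u) (𝓝[<] 0)) :
    a = 0 := by
  by_contra ha
  have ha2 : 0 < a ^ 2 := by positivity
  have hh : Tendsto h (𝓝[<] 0) (𝓝 (L / a ^ 2)) := by
    refine (hg.div (hΩ.pow 2) ha2.ne').congr' ?_
    filter_upwards [hΩ.eventually_ne ha] with u hu
    simp only [Pi.div_apply]
    field_simp
  have hgap : 0 < 1 - L / a ^ 2 := by
    rwa [((tendsto_const_nhds (x := (1 : ℝ))).sub hh).limsup_eq] at hlimsup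
  have hε : 0 < a ^ 2 * (1 - L / a ^ 2) / 2 := by positivity
  have hlower : ∀ᶠ u in 𝓝[<] 0, a ^ 2 * (1 - L / a ^ 2) / 2 < Ω u ^ 2 * (1 - h u) :=
    ((hΩ.pow 2).mul (tendsto_const_nhds.sub hh)).eventually_const_lt (by linarith)
  have hbot := tendsto_atBot_of_hasDerivAt_le_div hε <| by
    filter_upwards [hode, hlower, self_mem_nhdsWithin] with u hu hlow (hneg : u < 0)
    refine ⟨hu, ?_⟩
    rw [div_neg, neg_neg]
    exact div_le_div_of_nonpos_of_le hneg.le hlow.le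
  obtain ⟨u, hu_neg, hu_nonneg⟩ := ((hbot.eventually (eventually_lt_atBot 0)).and hg_nonneg).exists
  exact hu_neg.not_ge hu_nonneg

theorem stmt_2_general (u0 : ℝ) (hu0 : u0 < 0) (Ω0 h0 ψ : ℝ → ℝ)
    (hΩpos : ∀ u ∈ Set.Ico u0 (0:ℝ), 0 < Ω0 u)
    (hode1 : ∀ u ∈ Set.Ico u0 (0:ℝ),
      HasDerivAt (fun v => Real.log (Ω0 v)) (-(ψ u ^ 2) / (2 * (-u))) u)
    (hode2 : ∀ u ∈ Set.Ico u0 (0:ℝ),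
      HasDerivAt (fun v => Ω0 v ^ 2 * h0 v) (-(Ω0 u ^ 2 * (1 - h0 u) / (-u))) u)
    (hh0 : ∀ u ∈ Set.Ico u0 (0:ℝ), 0 < h0 u ∧ h0 u ≤ 1)
    (hlimsup : 0 < Filter.limsup (fun u => 1 - h0 u) (nhdsWithin 0 (Set.Ico u0 0))) :
    AntitoneOn (fun u => Ω0 u ^ 2 * h0 u) (Set.Ico u0 0) ∧
    AntitoneOn Ω0 (Set.Ico u0 0) ∧
    Filter.Tendsto (fun u => Ω0 u ^ 2 * h0 u) (nhdsWithin 0 (Set.Ico u0 0)) (nhds 0) ∧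
    Filter.Tendsto Ω0 (nhdsWithin 0 (Set.Ico u0 0)) (nhds 0) := by
  have hlogΩ_anti : AntitoneOn (fun v => Real.log (Ω0 v)) (Ico u0 0) :=
    antitoneOn_of_hasDerivAt_nonpos (convex_Ico u0 0) hode1 fun u hu => by
      have hu' : -u > 0 := neg_pos.2 (interior_subset hu).2
      exact div_nonpos_of_nonpos_of_nonneg (neg_nonpos.2 (sq_nonneg _)) (by positivity)
  have hΩ_anti : AntitoneOn Ω0 (Ico u0 0) := fun x hx y hy hxy =>
    (Real.log_le_log_iff (hΩpos y hy) (hΩpos x hx)).1 (hlogΩ_anti hx hy hxy)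
  have hg_anti : AntitoneOn (fun u => Ω0 u ^ 2 * h0 u) (Ico u0 0) :=
    antitoneOn_of_hasDerivAt_nonpos (convex_Ico u0 0) hode2 fun u hu => by
      have hu' : -u > 0 := neg_pos.2 (interior_subset hu).2
      have := (hh0 u (interior_subset hu)).2
      exact neg_nonpos.2 (div_nonneg (mul_nonneg (sq_nonneg _) (by linarith)) hu'.le)
  have hg_nonneg : ∀ u ∈ Ico u0 0, 0 ≤ Ω0 u ^ 2 * h0 u := fun u hu =>
    mul_nonneg (sq_nonneg _) (hh0 u hu).1.le
  rw [nhdsWithin_Ico_eq_nhdsLT hu0] at hlimsup ⊢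
  have hs : Ico u0 0 ∈ 𝓝[<] (0 : ℝ) := Ico_mem_nhdsLT hu0
  obtain ⟨a, hΩ⟩ := hΩ_anti.exists_tendsto_nhdsLT hu0
    ⟨0, by rintro _ ⟨u, hu, rfl⟩; exact (hΩpos u hu).le⟩
  obtain ⟨L, hg⟩ := hg_anti.exists_tendsto_nhdsLT hu0 ⟨0, by rintro _ ⟨u, hu, rfl⟩; exact hg_nonneg u hu⟩
  obtain rfl : a = 0 := lapse_limit_eq_zero hΩ hg (eventually_of_mem hs hode2)
    (eventually_of_mem hs hg_nonneg) hlimsup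
  refine ⟨hg_anti, hΩ_anti, ?_, hΩ⟩
  refine squeeze_zero' (eventually_of_mem hs hg_nonneg) ?_ (by simpa using hΩ.pow 2)
  filter_upwards [hs] with u hu
  exact mul_le_of_le_one_right (sq_nonneg _) (hh0 u hu).2

/-- On the incoming cone, with the ODEs
`(log Ω₀)' = -ψ²/(2(-u))` and `(Ω₀²h₀)' = -Ω₀²(1-h₀)/(-u)` on `[u₀,0)`,
`0 < h₀ ≤ 1`, and `limsup_{u→0⁻} (1 - h₀(u)) > 0`, both `Ω₀²h₀` and `Ω₀` are
nonincreasing on `[u₀,0)` and tend to `0` as `u → 0⁻`. -/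
theorem stmt_2 (u0 : ℝ) (hu0 : u0 < 0) (Ω0 h0 ψ : ℝ → ℝ)
    (hΩdiff : ∀ u ∈ Set.Ico u0 (0:ℝ), DifferentiableAt ℝ Ω0 u)
    (hhdiff : ∀ u ∈ Set.Ico u0 (0:ℝ), DifferentiableAt ℝ h0 u)
    (hψdiff : ∀ u ∈ Set.Ico u0 (0:ℝ), DifferentiableAt ℝ ψ u)
    (hΩpos : ∀ u ∈ Set.Ico u0 (0:ℝ), 0 < Ω0 u)
    (hode1 : ∀ u ∈ Set.Ico u0 (0:ℝ),
      HasDerivAt (fun v => Real.log (Ω0 v)) (-(ψ u ^ 2) / (2 * (-u))) u)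
    (hode2 : ∀ u ∈ Set.Ico u0 (0:ℝ),
      HasDerivAt (fun v => Ω0 v ^ 2 * h0 v) (-(Ω0 u ^ 2 * (1 - h0 u) / (-u))) u)
    (hh0 : ∀ u ∈ Set.Ico u0 (0:ℝ), 0 < h0 u ∧ h0 u ≤ 1)
    (hlimsup : 0 < Filter.limsup (fun u => 1 - h0 u) (nhdsWithin 0 (Set.Ico u0 0))) :
    AntitoneOn (fun u => Ω0 u ^ 2 * h0 u) (Set.Ico u0 0) ∧
    AntitoneOn Ω0 (Set.Ico u0 0) ∧
    Filter.Tendsto (fun u => Ω0 u ^ 2 * h0 u) (nhdsWithin 0 (Set.Ico u0 0)) (nhds 0) ∧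
    Filter.Tendsto Ω0 (nhdsWithin 0 (Set.Ico u0 0)) (nhds 0) :=
  stmt_2_general u0 hu0 Ω0 h0 ψ hΩpos hode1 hode2 hh0 hlimsup
end

section
/- Let $u_0<0$, let $\Omega_0:[u_0,0)\to(0,\infty)$ be nonincreasing, and let $h_0:[u_0,0)\to\mathbb{R}$ satisfy $0<h_0(u)\le1$ for all $u$, with $u\mapsto\Omega_0(u)^2h_0(u)$ differentiable and $\frac{d}{du}\big(\Omega_0(u)^2h_0(u)\big)=-\frac{\Omega_0(u)^2\,(1-h_0(u))}{-u}$ on $[u_0,0)$. If $\lim_{u\to0^-}\Omega_0(u)^2h_0(u)=0$, then $\lim_{u\to0^-}\Omega_0(u)=0$. -/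
open Set Filter Real


/-- If `Ω₀ : [u₀,0) → (0,∞)` is nonincreasing, `0 < h₀ ≤ 1`,
`(Ω₀²h₀)' = -Ω₀²(1-h₀)/(-u)` on `[u₀,0)`, and `Ω₀²h₀ → 0` as `u → 0⁻`,
then `Ω₀ → 0` as `u → 0⁻`. -/
theorem stmt_3 (u0 : ℝ) (hu0 : u0 < 0) (Ω0 h0 : ℝ → ℝ)
    (hΩpos : ∀ u ∈ Set.Ico u0 (0:ℝ), 0 < Ω0 u)
    (hΩmono : AntitoneOn Ω0 (Set.Ico u0 0))
    (hh0 : ∀ u ∈ Set.Ico u0 (0:ℝ), 0 < h0 u ∧ h0 u ≤ 1)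
    (hode : ∀ u ∈ Set.Ico u0 (0:ℝ),
      HasDerivAt (fun v => Ω0 v ^ 2 * h0 v) (-(Ω0 u ^ 2 * (1 - h0 u) / (-u))) u)
    (hlim : Filter.Tendsto (fun u => Ω0 u ^ 2 * h0 u)
      (nhdsWithin 0 (Set.Ico u0 0)) (nhds 0)) :
    Filter.Tendsto Ω0 (nhdsWithin 0 (Set.Ico u0 0)) (nhds 0) := by
  have hbdd : BddBelow (Ω0 '' Ico u0 0) := ⟨0, by rintro _ ⟨u, hu, rfl⟩; exact (hΩpos u hu).le⟩
  have hne : (Ω0 '' Ico u0 0).Nonempty := ⟨Ω0 u0, ⟨u0, ⟨le_refl _, hu0⟩, rfl⟩⟩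
  set L := sInf (Ω0 '' Ico u0 0) with hLdef
  have hLge : ∀ u ∈ Ico u0 (0:ℝ), L ≤ Ω0 u := fun u hu => csInf_le hbdd ⟨u, hu, rfl⟩
  have hL0 : 0 ≤ L := le_csInf hne (by rintro _ ⟨u, hu, rfl⟩; exact (hΩpos u hu).le)
  have hLzero : L = 0 := by
    by_contra hLne
    have hLpos : 0 < L := lt_of_le_of_ne hL0 (Ne.symm hLne)
    rw [Metric.tendsto_nhdsWithin_nhds] at hlim
    obtain ⟨δ, hδpos, hδ⟩ := hlim (L ^ 2 / 2) (by positivity)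
    set u1 : ℝ := max u0 (-(δ / 2)) with hu1def
    have hu1neg : u1 < 0 := max_lt hu0 (by linarith)
    have hu1mem : u1 ∈ Ico u0 (0:ℝ) := ⟨le_max_left _ _, hu1neg⟩
    have hsub : Ico u1 (0:ℝ) ⊆ Ico u0 0 := Ico_subset_Ico (le_max_left _ _) le_rfl
    have hflt : ∀ u ∈ Ico u1 (0:ℝ), Ω0 u ^ 2 * h0 u < L ^ 2 / 2 := by
      intro u hu
      have hmem : u ∈ Ico u0 (0:ℝ) := hsub hu
      have hdist : dist u 0 < δ := by
        rw [Real.dist_eq, sub_zero, abs_of_neg hu.2]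
        have : -(δ / 2) ≤ u1 := le_max_right _ _
        linarith [hu.1]
      have := hδ hmem hdist
      rw [Real.dist_eq, sub_zero] at this
      exact lt_of_le_of_lt (le_abs_self _) this
    -- h0 < 1/2 on [u1, 0)
    have hhalf : ∀ u ∈ Ico u1 (0:ℝ), h0 u < 1 / 2 := by
      intro u hu
      have hmem := hsub hu
      have hΩ : L ≤ Ω0 u := hLge u hmem
      have hΩp := hΩpos u hmem
      have hΩsq : L ^ 2 ≤ Ω0 u ^ 2 := by nlinarith
      have := hflt u hu
      nlinarith [(hh0 u hmem).1]
    -- the comparison function g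
    set g : ℝ → ℝ := fun u => Ω0 u ^ 2 * h0 u - L ^ 2 / 2 * Real.log (-u) with hgdef
    have hg' : ∀ u ∈ Ico u1 (0:ℝ),
        HasDerivAt g (-(Ω0 u ^ 2 * (1 - h0 u) / (-u)) - L ^ 2 / 2 * ((-u)⁻¹ * (-1))) u := by
      intro u hu
      have hune : -u ≠ 0 := by have := hu.2; intro h; linarith [neg_eq_zero.mp h]
      have hlog : HasDerivAt (fun v : ℝ => Real.log (-v)) ((-u)⁻¹ * (-1)) u :=
        (Real.hasDerivAt_log hune).comp u (hasDerivAt_neg u)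
      exact ((hode u (hsub hu)).sub (hlog.const_mul (L ^ 2 / 2))).congr_deriv (by ring)
    have hganti : AntitoneOn g (Ico u1 0) := by
      apply antitoneOn_of_deriv_nonpos (convex_Ico u1 0)
      · exact fun x hx => (hg' x hx).continuousAt.continuousWithinAt
      · rw [interior_Ico]
        exact fun x hx => ((hg' x (Ioo_subset_Ico_self hx)).differentiableAt).differentiableWithinAt
      · rw [interior_Ico]
        intro x hx
        have hx' : x ∈ Ico u1 (0:ℝ) := Ioo_subset_Ico_self hx
        rw [(hg' x hx').deriv]
        have hxneg : x < 0 := hx'.2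
        have hnx : (0:ℝ) < -x := by linarith
        have hΩ : L ≤ Ω0 x := hLge x (hsub hx')
        have hΩsq : L ^ 2 ≤ Ω0 x ^ 2 := by nlinarith
        have hh : h0 x < 1 / 2 := hhalf x hx'
        have key : L ^ 2 / 2 ≤ Ω0 x ^ 2 * (1 - h0 x) := by nlinarith
        have hinvpos : (0:ℝ) < (-x)⁻¹ := inv_pos.mpr hnx
        rw [div_eq_mul_inv]
        nlinarith [mul_nonneg (sub_nonneg.2 key) hinvpos.le]
    -- choose u2 near 0 to get contradiction
    set c : ℝ := Real.log (-u1) - 2 * (Ω0 u1 ^ 2 * h0 u1) / L ^ 2 - 1 with hcdef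
    set r : ℝ := min (-u1) (Real.exp c) with hrdef
    have hrpos : 0 < r := lt_min (by linarith) (Real.exp_pos c)
    have hu2mem : -r ∈ Ico u1 (0:ℝ) := ⟨by have := min_le_left (-u1) (Real.exp c); linarith, by linarith⟩
    have hle : u1 ≤ -r := hu2mem.1
    have hgle := hganti (left_mem_Ico.mpr hu1neg) hu2mem hle
    have hlogr : Real.log r ≤ c := by
      calc Real.log r ≤ Real.log (Real.exp c) := Real.log_le_log hrpos (min_le_right _ _)
        _ = c := Real.log_exp c
    have hfpos : 0 < Ω0 (-r) ^ 2 * h0 (-r) := by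
      have hm := hsub hu2mem
      have := hΩpos _ hm
      have := (hh0 _ hm).1
      positivity
    have hneg : - - r = r := neg_neg r
    have hLsq : (0:ℝ) < L ^ 2 := by positivity
    -- unfold g inequality
    simp only [hgdef, hneg] at hgle
    have hexp : L ^ 2 / 2 * c
        = L ^ 2 / 2 * Real.log (-u1) - Ω0 u1 ^ 2 * h0 u1 - L ^ 2 / 2 := by
      rw [hcdef]
      field_simp
    have hmul : L ^ 2 / 2 * Real.log r ≤ L ^ 2 / 2 * c :=
      mul_le_mul_of_nonneg_left hlogr (by positivity)
    linarith [hgle, hfpos, hexp, hmul]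
  -- now conclude
  rw [Metric.tendsto_nhdsWithin_nhds]
  intro ε hε
  have : sInf (Ω0 '' Ico u0 0) < ε := by rw [← hLdef, hLzero]; exact hε
  obtain ⟨_, ⟨u', hu'mem, rfl⟩, hu'lt⟩ := exists_lt_of_csInf_lt hne this
  refine ⟨-u', by linarith [hu'mem.2], fun u hu hd => ?_⟩
  rw [Real.dist_eq, sub_zero] at hd
  have hult : u' ≤ u := by
    rw [abs_of_neg hu.2] at hd; linarith
  have : Ω0 u ≤ Ω0 u' := hΩmono hu'mem hu hult
  rw [Real.dist_eq, sub_zero, abs_of_pos (hΩpos u hu)]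
  linarith
end

section
/- Let $c_1>0$, $u_*<0$, and let $\Omega_0:(u_*,0)\to(0,1)$ be nonincreasing with $\Omega_0(u)^2\le2^{-8}c_1^{-1}$ for all $u\in(u_*,0)$. For $\gamma>0$ define $\delta(u;\gamma)=\frac{-u}{4\,\Omega_0(u)^2}\exp\Big(-\frac{\Omega_0(u)^{-\gamma}}{2^8c_1}\Big)$. If $\gamma\in(0,2]$ and $u,v\in(u_*,0)$ satisfy $\delta(u;\gamma)=\delta(v;2)$, then $\Omega_0(v)\ge\Omega_0(u)$; consequently $\Omega_0(u)^{\gamma-4}\,\Omega_0(v)^2\ge\Omega_0(u)^{\gamma-2}$. -/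
lemma key_decay (C t s : ℝ) (hC : 0 < C) (hCt : C ≤ t) (hts : t < s) :
    s * Real.exp (-s / C) < t * Real.exp (-t / C) := by
  have ht : 0 < t := lt_of_lt_of_le hC hCt
  have hx : 0 < (s - t) / C := div_pos (by linarith) hC
  have h1 : (s - t) / C + 1 < Real.exp ((s - t) / C) :=
    Real.add_one_lt_exp (ne_of_gt hx)
  have h2 : s < t * Real.exp ((s - t) / C) := by
    have : t * ((s - t) / C + 1) ≥ s := by
      have : t * ((s - t) / C) ≥ s - t := by
        rw [ge_iff_le, ← mul_div_assoc, le_div_iff₀ hC]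
        nlinarith
      linarith
    calc s ≤ t * ((s - t) / C + 1) := this
    _ < t * Real.exp ((s - t) / C) := by
      exact mul_lt_mul_of_pos_left h1 ht
  have h3 : Real.exp ((s - t) / C) * Real.exp (-s / C) = Real.exp (-t / C) := by
    rw [← Real.exp_add]; ring_nf
  calc s * Real.exp (-s / C) < t * Real.exp ((s - t) / C) * Real.exp (-s / C) := by
        exact mul_lt_mul_of_pos_right h2 (Real.exp_pos _)
    _ = t * Real.exp (-t / C) := by rw [mul_assoc, h3]

/-- comparison of scales for `γ ∈ (0,2]`: if `δ(u;γ) = δ(v;2)` then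
`Ω₀(v) ≥ Ω₀(u)`, hence `Ω₀(u)^{γ-4}Ω₀(v)² ≥ Ω₀(u)^{γ-2}`. -/
theorem stmt_15 (c1 ustar : ℝ) (hc1 : 0 < c1) (hustar : ustar < 0)
    (Ω0 : ℝ → ℝ)
    (hmono : AntitoneOn Ω0 (Set.Ioo ustar 0))
    (hΩ : ∀ u ∈ Set.Ioo ustar (0:ℝ), 0 < Ω0 u ∧ Ω0 u < 1 ∧ Ω0 u ^ 2 ≤ (2 ^ 8 * c1)⁻¹)
    (γ : ℝ) (hγ : γ ∈ Set.Ioc (0:ℝ) 2)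
    (u v : ℝ) (hu : u ∈ Set.Ioo ustar (0:ℝ)) (hv : v ∈ Set.Ioo ustar (0:ℝ))
    (hδ : (-u) / (4 * Ω0 u ^ 2) * Real.exp (-(Ω0 u ^ (-γ)) / (2 ^ 8 * c1))
        = (-v) / (4 * Ω0 v ^ 2) * Real.exp (-(Ω0 v ^ (-(2:ℝ))) / (2 ^ 8 * c1))) :
    Ω0 u ≤ Ω0 v ∧ Ω0 u ^ (γ - 2) ≤ Ω0 u ^ (γ - 4) * Ω0 v ^ 2 := by
  obtain ⟨hΩu, hΩu1, hΩu2⟩ := hΩ u hu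
  obtain ⟨hΩv, hΩv1, hΩv2⟩ := hΩ v hv
  set C : ℝ := 2 ^ 8 * c1 with hCdef
  have hC : 0 < C := by positivity
  have hmain : Ω0 u ≤ Ω0 v := by
    by_contra hcon
    push_neg at hcon
    -- v > u
    have huv : u < v := by
      by_contra h
      push_neg at h
      exact absurd (hmono hv hu h) (not_le.mpr hcon)
    set t : ℝ := Ω0 u ^ (-(2:ℝ)) with htdef
    set s : ℝ := Ω0 v ^ (-(2:ℝ)) with hsdef
    have ht2 : t = (Ω0 u ^ 2)⁻¹ := by
      rw [htdef, Real.rpow_neg hΩu.le, ← Real.rpow_natCast (Ω0 u) 2]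
      norm_num
    have hs2 : s = (Ω0 v ^ 2)⁻¹ := by
      rw [hsdef, Real.rpow_neg hΩv.le, ← Real.rpow_natCast (Ω0 v) 2]
      norm_num
    have hCt : C ≤ t := by
      rw [ht2, le_inv_comm₀ hC (by positivity)]
      exact hΩu2
    have hts : t < s := by
      rw [ht2, hs2]
      have : Ω0 v ^ 2 < Ω0 u ^ 2 := by
        apply pow_lt_pow_left₀ hcon hΩv.le
        norm_num
      exact inv_strictAnti₀ (by positivity) this
    -- key inequality
    have hkey := key_decay C t s hC hCt hts
    -- exponent comparison for γ
    have hexp : Ω0 u ^ (-γ) ≤ t := by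
      rw [htdef]
      exact Real.rpow_le_rpow_of_exponent_ge hΩu hΩu1.le (by linarith [hγ.2])
    have hun : (0:ℝ) < -u := by linarith [hu.2]
    have hvn : (0:ℝ) < -v := by linarith [hv.2]
    have hvu : -v < -u := by linarith
    have hlhs : (-u) / 4 * (t * Real.exp (-t / C))
        ≤ (-u) / (4 * Ω0 u ^ 2) * Real.exp (-(Ω0 u ^ (-γ)) / C) := by
      have h1 : (-u) / 4 * (t * Real.exp (-t / C))
          = (-u) / (4 * Ω0 u ^ 2) * Real.exp (-t / C) := by
        rw [ht2]; field_simp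
      rw [h1]
      apply mul_le_mul_of_nonneg_left _ (by positivity)
      apply Real.exp_le_exp.mpr
      apply div_le_div_of_nonneg_right (by linarith) hC.le
    have hrhs : (-v) / (4 * Ω0 v ^ 2) * Real.exp (-s / C)
        = (-v) / 4 * (s * Real.exp (-s / C)) := by
      rw [hs2]; field_simp
    have hlt : (-v) / 4 * (s * Real.exp (-s / C)) < (-u) / 4 * (t * Real.exp (-t / C)) := by
      have hpos : 0 < t * Real.exp (-t / C) := by
        have := lt_of_lt_of_le hC hCt
        positivity
      calc (-v) / 4 * (s * Real.exp (-s / C)) < (-v) / 4 * (t * Real.exp (-t / C)) := by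
            apply mul_lt_mul_of_pos_left hkey (by linarith)
        _ < (-u) / 4 * (t * Real.exp (-t / C)) := by
            apply mul_lt_mul_of_pos_right _ hpos
            linarith
    rw [hδ, hrhs] at hlhs
    exact absurd hlhs (not_le.mpr hlt)
  refine ⟨hmain, ?_⟩
  have h1 : Ω0 u ^ (γ - 2) = Ω0 u ^ (γ - 4) * Ω0 u ^ 2 := by
    rw [← Real.rpow_natCast (Ω0 u) 2, ← Real.rpow_add hΩu]
    norm_num
    congr 1
    ring
  rw [h1]
  apply mul_le_mul_of_nonneg_left _ (Real.rpow_nonneg hΩu.le _)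
  exact pow_le_pow_left₀ hΩu.le hmain 2
end

section
/- Let $c_1>0$, $u_*<0$, and let $\Omega_0:(u_*,0)\to(0,1)$ be nonincreasing with $\Omega_0(u)^2\le2^{-8}c_1^{-1}$ for all $u\in(u_*,0)$. For $\gamma>0$ define $\delta(u;\gamma)=\frac{-u}{4\,\Omega_0(u)^2}\exp\Big(-\frac{\Omega_0(u)^{-\gamma}}{2^8c_1}\Big)$. If $\gamma\in[2,4)$ and $u,v\in(u_*,0)$ satisfy $\delta(u;\gamma)=\delta(v;2)$, then $\Omega_0(v)\le\Omega_0(u)$; consequently $\Omega_0(u)^{\gamma-4}\,\Omega_0(v)^2\le\Omega_0(u)^{\gamma-2}$. -/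
/-- `t ↦ t * exp (-t/K)` is antitone on `[K, ∞)`. -/
lemma aux_dec_16 (K s t : ℝ) (hK : 0 < K) (hs : K ≤ s) (hst : s ≤ t) :
    t * Real.exp (-t / K) ≤ s * Real.exp (-s / K) := by
  have hs0 : 0 < s := lt_of_lt_of_le hK hs
  have h1 : t ≤ s * Real.exp ((t - s) / K) := by
    have hexp := Real.add_one_le_exp ((t - s) / K)
    have hx0 : 0 ≤ (t - s) / K := div_nonneg (by linarith) hK.le
    have hxK : (t - s) / K * K = t - s := div_mul_cancel₀ _ hK.ne'
    nlinarith [mul_le_mul_of_nonneg_left hexp hs0.le,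
      mul_le_mul_of_nonneg_right hs hx0]
  calc t * Real.exp (-t / K)
      ≤ (s * Real.exp ((t - s) / K)) * Real.exp (-t / K) :=
        mul_le_mul_of_nonneg_right h1 (Real.exp_pos _).le
    _ = s * Real.exp (-s / K) := by
        rw [mul_assoc, ← Real.exp_add]
        congr 1
        field_simp
        ring

/-- comparison of scales for `γ ∈ [2,4)`: if `δ(u;γ) = δ(v;2)` then
`Ω₀(v) ≤ Ω₀(u)`, hence `Ω₀(u)^{γ-4}Ω₀(v)² ≤ Ω₀(u)^{γ-2}`. -/
theorem stmt_16 (c1 ustar : ℝ) (hc1 : 0 < c1) (hustar : ustar < 0)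
    (Ω0 : ℝ → ℝ)
    (hmono : AntitoneOn Ω0 (Set.Ioo ustar 0))
    (hΩ : ∀ u ∈ Set.Ioo ustar (0:ℝ), 0 < Ω0 u ∧ Ω0 u < 1 ∧ Ω0 u ^ 2 ≤ (2 ^ 8 * c1)⁻¹)
    (γ : ℝ) (hγ : γ ∈ Set.Ico (2:ℝ) 4)
    (u v : ℝ) (hu : u ∈ Set.Ioo ustar (0:ℝ)) (hv : v ∈ Set.Ioo ustar (0:ℝ))
    (hδ : (-u) / (4 * Ω0 u ^ 2) * Real.exp (-(Ω0 u ^ (-γ)) / (2 ^ 8 * c1))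
        = (-v) / (4 * Ω0 v ^ 2) * Real.exp (-(Ω0 v ^ (-(2:ℝ))) / (2 ^ 8 * c1))) :
    Ω0 v ≤ Ω0 u ∧ Ω0 u ^ (γ - 4) * Ω0 v ^ 2 ≤ Ω0 u ^ (γ - 2) := by
  obtain ⟨ha0, ha1, haK⟩ := hΩ u hu
  obtain ⟨hb0, hb1, hbK⟩ := hΩ v hv
  set K : ℝ := 2 ^ 8 * c1 with hKdef
  have hK0 : 0 < K := by positivity
  set a := Ω0 u with hadef
  set b := Ω0 v with hbdef
  have ea : a ^ (-(2:ℝ)) = (a ^ 2)⁻¹ := by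
    rw [Real.rpow_neg ha0.le, show (2:ℝ) = ((2:ℕ):ℝ) by norm_num, Real.rpow_natCast]
  have eb : b ^ (-(2:ℝ)) = (b ^ 2)⁻¹ := by
    rw [Real.rpow_neg hb0.le, show (2:ℝ) = ((2:ℕ):ℝ) by norm_num, Real.rpow_natCast]
  have key : b ≤ a := by
    by_contra hcon
    push_neg at hcon
    have hvu : v < u := by
      by_contra h'
      push_neg at h'
      exact absurd (hmono hu hv h') (not_le.mpr hcon)
    have ha2pos : (0:ℝ) < a ^ 2 := by positivity
    have hb2pos : (0:ℝ) < b ^ 2 := by positivity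
    have hKb : K ≤ (b ^ 2)⁻¹ := by
      have h2 := inv_anti₀ hb2pos hbK
      simpa using h2
    have htab : (b ^ 2)⁻¹ ≤ (a ^ 2)⁻¹ := by
      have : a ^ 2 ≤ b ^ 2 := by nlinarith
      exact inv_anti₀ ha2pos this
    have h1 : (a ^ 2)⁻¹ ≤ a ^ (-γ) := by
      rw [← ea]
      exact Real.rpow_le_rpow_of_exponent_ge ha0 ha1.le (by linarith [hγ.1])
    have hgpos : 0 < (b ^ 2)⁻¹ * Real.exp (-(b ^ 2)⁻¹ / K) := by positivity
    have cdec := aux_dec_16 K ((b ^ 2)⁻¹) ((a ^ 2)⁻¹) hK0 hKb htab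
    have hune : 0 < -u := by linarith [hu.2]
    have hvne : 0 < -v := by linarith [hv.2]
    have chain : (-u) / (4 * a ^ 2) * Real.exp (-(a ^ (-γ)) / K)
        < (-v) / (4 * b ^ 2) * Real.exp (-(b ^ (-(2:ℝ))) / K) := by
      calc (-u) / (4 * a ^ 2) * Real.exp (-(a ^ (-γ)) / K)
          ≤ (-u) / (4 * a ^ 2) * Real.exp (-(a ^ 2)⁻¹ / K) := by
            apply mul_le_mul_of_nonneg_left _ (by positivity)
            apply Real.exp_le_exp.mpr
            gcongr
        _ = (-u) / 4 * ((a ^ 2)⁻¹ * Real.exp (-(a ^ 2)⁻¹ / K)) := by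
            field_simp
        _ ≤ (-u) / 4 * ((b ^ 2)⁻¹ * Real.exp (-(b ^ 2)⁻¹ / K)) :=
            mul_le_mul_of_nonneg_left cdec (by positivity)
        _ < (-v) / 4 * ((b ^ 2)⁻¹ * Real.exp (-(b ^ 2)⁻¹ / K)) := by
            apply mul_lt_mul_of_pos_right _ hgpos
            linarith
        _ = (-v) / (4 * b ^ 2) * Real.exp (-(b ^ (-(2:ℝ))) / K) := by
            rw [eb]
            field_simp
    exact absurd hδ (ne_of_lt chain)
  refine ⟨key, ?_⟩
  have hsplit : a ^ (γ - 2) = a ^ (γ - 4) * a ^ 2 := by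
    rw [show γ - 2 = (γ - 4) + (2:ℝ) by ring, Real.rpow_add ha0,
      show (2:ℝ) = ((2:ℕ):ℝ) by norm_num, Real.rpow_natCast]
  rw [hsplit]
  exact mul_le_mul_of_nonneg_left (pow_le_pow_left₀ hb0.le key 2)
    (Real.rpow_nonneg ha0.le _)
end
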